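/- There is an absolute constant C > 0 such that the following holds for every dimension d ≥ 1. Let H be a Hermitian d×d matrix with orthonormal eigenbasis {ψ_i} and eigenvalues {E_i}, let β, μ > 0 with βμ ≤ 1, and let A be a d×d matrix satisfying ⟨ψ_i, A ψ_j⟩ = 0 whenever |E_i − E_j| > μ. Then, with ρ := e^{−βH}/Tr(e^{−βH}), one has ‖A − ρ^{1/2} A ρ^{−1/2}‖ ≤ C·βμ·‖A‖. -/

import Mathlib

open scoped ComplexOrder Matrix

namespace Stmt18

/-- The space of `d × d` complex matrices. -/
abbrev Mat (d : ℕ) := Matrix (Fin d) (Fin d) ℂ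

/-- Operator (spectral) norm of a complex matrix. -/
noncomputable def opNorm {m n : Type*} [Fintype m] [Fintype n] [DecidableEq n]
    (A : Matrix m n ℂ) : ℝ :=
  ‖LinearMap.toContinuousLinearMap (Matrix.toEuclideanLin A)‖

/-- The Gibbs state `e^{-βH}/Tr e^{-βH}`. -/
noncomputable def gibbs {d : ℕ} (H : Mat d) (β : ℝ) : Mat d :=
  ((NormedSpace.exp ((-(β : ℂ)) • H)).trace)⁻¹ • NormedSpace.exp ((-(β : ℂ)) • H)

/-!
In the eigenbasis `ψ` of `H`, conjugation by `ρ^{1/2}` multiplies the entry `A i j` by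
`exp (-β (E i - E j) / 2)`, and `A` lives on the band `|E i - E j| ≤ μ`. Cutting the spectrum into
intervals of length `μ` with integer labels `n i`, the band lies in the three block diagonals
`n i - n j ∈ {-1, 0, 1}`, which are told apart by `n i - n j mod 3`. Each block diagonal has norm at
most `‖A‖`, being an average of conjugates of `A` by diagonal unitaries of cube roots of unity. On
one block diagonal the multiplier factors as `l i * r j` with `l` and `r` within `O(βμ)` of `1`, so
there `X ↦ X - diag l * X * diag r` has norm `O(βμ)`.
-/

open Matrix
open scoped Matrix.Norms.L2Operator

lemma norm_sub_mul_mul_le {R : Type*} [NormedRing R] (x l r : R) :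
    ‖x - l * x * r‖ ≤ ‖1 - l‖ * ‖x‖ + ‖l‖ * ‖x‖ * ‖1 - r‖ := by
  rw [show x - l * x * r = (1 - l) * x + l * x * (1 - r) by noncomm_ring]
  exact (norm_add_le _ _).trans (add_le_add (norm_mul_le _ _) norm_mul₃_le)

lemma norm_diagonal_le {ι 𝕜 : Type*} [Fintype ι] [DecidableEq ι] [RCLike 𝕜] {v : ι → 𝕜} {C : ℝ}
    (hC : 0 ≤ C) (h : ∀ i, ‖v i‖ ≤ C) : ‖diagonal v‖ ≤ C := by
  rw [l2_opNorm_diagonal]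
  exact pi_norm_le_iff_of_nonneg hC |>.2 h

def blockPart {ι α : Type*} [Zero α] {N : ℕ} (c : ι → ZMod N) (k : ZMod N) (B : Matrix ι ι α) :
    Matrix ι ι α :=
  of fun i j => if c i - c j = k then B i j else 0

section BlockPart

variable {ι : Type*} {N : ℕ} [NeZero N]

lemma sum_blockPart {α : Type*} [AddCommMonoid α] (c : ι → ZMod N) (B : Matrix ι ι α) :
    ∑ k, blockPart c k B = B := by
  ext i j
  simp [blockPart, Matrix.sum_apply]

variable [Fintype ι] [DecidableEq ι]

lemma blockPart_eq_smul_sum (c : ι → ZMod N) (k : ZMod N) (B : Matrix ι ι ℂ) :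
    blockPart c k B = (N : ℂ)⁻¹ • ∑ m : ZMod N, ZMod.stdAddChar (-(m * k)) •
      (diagonal (fun i => ZMod.stdAddChar (m * c i)) * B *
        star (diagonal fun i => ZMod.stdAddChar (m * c i))) := by
  ext i j
  have hterm : ∀ m : ZMod N, ZMod.stdAddChar (-(m * k)) •
      (diagonal (fun i => ZMod.stdAddChar (m * c i)) * B *
        star (diagonal fun i => ZMod.stdAddChar (m * c i))) i j
        = ZMod.stdAddChar (m * (c i - c j - k)) * B i j := by
    intro m
    rw [star_eq_conjTranspose, diagonal_conjTranspose, mul_diagonal, diagonal_mul, Pi.star_apply,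
      Complex.star_def, ← AddChar.map_neg_eq_conj, mul_sub, mul_sub, sub_eq_add_neg,
      sub_eq_add_neg, AddChar.map_add_eq_mul, AddChar.map_add_eq_mul, smul_eq_mul]
    ring
  simp only [blockPart, of_apply, Matrix.smul_apply, Matrix.sum_apply, hterm,
    ← Finset.sum_mul, AddChar.sum_mulShift _ (ZMod.isPrimitive_stdAddChar N), sub_eq_zero,
    ZMod.card]
  split_ifs <;> simp [NeZero.ne N]

lemma norm_blockPart_le (c : ι → ZMod N) (k : ZMod N) (B : Matrix ι ι ℂ) :
    ‖blockPart c k B‖ ≤ ‖B‖ := by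
  have hconj : ∀ m : ZMod N, ‖ZMod.stdAddChar (-(m * k)) •
      (diagonal (fun i => ZMod.stdAddChar (m * c i)) * B *
        star (diagonal fun i => ZMod.stdAddChar (m * c i)))‖ ≤ ‖B‖ := fun m => by
    have hW : ‖diagonal (fun i => ZMod.stdAddChar (m * c i))‖ ≤ 1 :=
      norm_diagonal_le zero_le_one fun i => (AddChar.norm_apply _ _).le
    rw [norm_smul, AddChar.norm_apply, one_mul]
    refine norm_mul₃_le.trans ?_
    rw [norm_star]
    calc _ ≤ 1 * ‖B‖ * 1 := by gcongr
      _ = ‖B‖ := by ring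
  rw [blockPart_eq_smul_sum]
  refine (norm_smul_le _ _).trans ?_
  grw [norm_sum_le, Finset.sum_le_sum fun m _ => hconj m]
  simp [ZMod.card, NeZero.ne N]

end BlockPart

lemma abs_floor_sub_floor_le_one {u v : ℝ} (h : |u - v| ≤ 1) : |⌊u⌋ - ⌊v⌋| ≤ 1 := by
  rw [abs_le] at h
  have hu := Int.floor_le u
  have hu' := Int.lt_floor_add_one u
  have hv := Int.floor_le v
  have hv' := Int.lt_floor_add_one v
  have h1 : ⌊u⌋ - ⌊v⌋ < 2 := by
    have : ((⌊u⌋ - ⌊v⌋ : ℤ) : ℝ) < 2 := by push_cast; linarith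
    exact_mod_cast this
  have h2 : -2 < ⌊u⌋ - ⌊v⌋ := by
    have : (-2 : ℝ) < ((⌊u⌋ - ⌊v⌋ : ℤ) : ℝ) := by push_cast; linarith
    exact_mod_cast this
  rw [abs_le]
  omega

lemma abs_valMinAbs_le_one (k : ZMod 3) : |k.valMinAbs| ≤ 1 := by
  have := k.natAbs_valMinAbs_le
  rw [abs_le]
  omega

lemma eq_valMinAbs_of_abs_le_one {m : ℤ} {k : ZMod 3} (hm : |m| ≤ 1) (hk : (m : ZMod 3) = k) :
    m = k.valMinAbs := by
  rw [abs_le] at hm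
  refine ((ZMod.valMinAbs_spec k m).2 ⟨hk.symm, ?_, ?_⟩).symm <;> push_cast <;> omega

section Band

variable {ι : Type*} [Fintype ι] [DecidableEq ι]

lemma diagonal_mul_mul_diagonal_congr {α : Type*} [CommSemiring α] {p q l r : ι → α}
    {X : Matrix ι ι α} (h : ∀ i j, X i j ≠ 0 → p i * q j = l i * r j) :
    diagonal p * X * diagonal q = diagonal l * X * diagonal r := by
  ext i j
  simp only [mul_diagonal, diagonal_mul]
  by_cases hX : X i j = 0
  · simp [hX]
  · rw [mul_right_comm, h i j hX, mul_right_comm]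

lemma norm_one_sub_diagonal_exp_le {y : ι → ℝ} {s : ℝ} (hs0 : 0 ≤ s) (hs : s ≤ 1)
    (hy : ∀ i, |y i| ≤ s) : ‖1 - diagonal (fun i => (Real.exp (y i) : ℂ))‖ ≤ 2 * s := by
  rw [← diagonal_one, diagonal_sub]
  refine norm_diagonal_le (by positivity) fun i => ?_
  rw [norm_sub_rev, ← Complex.ofReal_one, ← Complex.ofReal_sub,
    Complex.norm_real, Real.norm_eq_abs]
  exact (Real.abs_exp_sub_one_le ((hy i).trans hs)).trans (by linarith [hy i])

lemma norm_diagonal_exp_le {y : ι → ℝ} (hy : ∀ i, y i ≤ 1) :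
    ‖diagonal (fun i => (Real.exp (y i) : ℂ))‖ ≤ 3 := by
  refine norm_diagonal_le (by norm_num) fun i => ?_
  rw [Complex.norm_real, Real.norm_of_nonneg (Real.exp_pos _).le]
  exact (Real.exp_le_exp.2 (hy i)).trans Real.exp_one_lt_three.le

lemma norm_sub_diagonal_exp_conj_le_of_block {x : ι → ℝ} {t : ℝ} (ht0 : 0 ≤ t) (ht : t ≤ 1 / 2)
    {n : ι → ℤ} (hn : ∀ i, t * n i ≤ x i ∧ x i ≤ t * n i + t) {κ : ℤ} (hκ : |κ| ≤ 1)
    {X : Matrix ι ι ℂ} (hX : ∀ i j, X i j ≠ 0 → n i - n j = κ) :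
    ‖X - diagonal (fun i => (Real.exp (-x i) : ℂ)) * X * diagonal (fun i => (Real.exp (x i) : ℂ))‖
      ≤ 10 * t * ‖X‖ := by
  set y : ι → ℝ := fun i => t * n i - x i - t * κ
  set z : ι → ℝ := fun i => x i - t * n i
  have hκt : |t * κ| ≤ t := by
    rw [abs_mul, abs_of_nonneg ht0]
    exact mul_le_of_le_one_right ht0 (by exact_mod_cast hκ)
  have hy : ∀ i, |y i| ≤ 2 * t := fun i => by
    have := hn i
    rw [abs_le] at hκt ⊢
    constructor <;> linarith
  have hz : ∀ i, |z i| ≤ t := fun i => by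
    have := hn i
    rw [abs_le]
    constructor <;> linarith
  rw [diagonal_mul_mul_diagonal_congr (l := fun i => (Real.exp (y i) : ℂ))
    (r := fun i => (Real.exp (z i) : ℂ)) fun i j hij => ?_]
  · calc _ ≤ 2 * (2 * t) * ‖X‖ + 3 * ‖X‖ * (2 * t) := by
          grw [norm_sub_mul_mul_le, norm_one_sub_diagonal_exp_le (by positivity) (by linarith) hy,
            norm_diagonal_exp_le fun i => (le_abs_self _).trans ((hy i).trans (by linarith)),
            norm_one_sub_diagonal_exp_le ht0 (by linarith) hz]
      _ = 10 * t * ‖X‖ := by ring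
  · have hnij : (n i : ℝ) - n j = κ := by exact_mod_cast hX i j hij
    simp only [← Complex.ofReal_mul, ← Real.exp_add, y, z]
    congr 2
    linear_combination (-t) * hnij

lemma norm_sub_diagonal_exp_conj_le {x : ι → ℝ} {t : ℝ} (ht0 : 0 < t) (ht : t ≤ 1 / 2)
    {B : Matrix ι ι ℂ} (hB : ∀ i j, t < |x i - x j| → B i j = 0) :
    ‖B - diagonal (fun i => (Real.exp (-x i) : ℂ)) * B * diagonal (fun i => (Real.exp (x i) : ℂ))‖
      ≤ 30 * t * ‖B‖ := by
  set L := diagonal (fun i => (Real.exp (-x i) : ℂ))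
  set R := diagonal (fun i => (Real.exp (x i) : ℂ))
  set n : ι → ℤ := fun i => ⌊x i / t⌋
  set c : ι → ZMod 3 := fun i => n i
  have hn : ∀ i, t * n i ≤ x i ∧ x i < t * n i + t := fun i => by
    have h1 := Int.floor_le (x i / t)
    have h2 := Int.lt_floor_add_one (x i / t)
    rw [le_div_iff₀' ht0] at h1
    rw [div_lt_iff₀' ht0] at h2
    exact ⟨h1, by linarith⟩
  have hband : ∀ i j, B i j ≠ 0 → |n i - n j| ≤ 1 := fun i j hij => by
    have hx : |x i - x j| ≤ t := not_lt.1 fun h => hij (hB i j h)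
    refine abs_floor_sub_floor_le_one ?_
    rwa [← sub_div, abs_div, abs_of_pos ht0, div_le_one ht0]
  have hblock : ∀ k : ZMod 3, ‖blockPart c k B - L * blockPart c k B * R‖ ≤ 10 * t * ‖B‖ := by
    intro k
    refine (norm_sub_diagonal_exp_conj_le_of_block ht0.le ht (fun i => ⟨(hn i).1, (hn i).2.le⟩)
      (abs_valMinAbs_le_one k) fun i j hij => ?_).trans ?_
    · simp only [blockPart, of_apply, ne_eq, ite_eq_right_iff, not_forall] at hij
      obtain ⟨hcij, hij⟩ := hij
      exact eq_valMinAbs_of_abs_le_one (hband i j hij) (by push_cast; exact hcij)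
    · gcongr
      exact norm_blockPart_le c k B
  calc _ = ‖∑ k, (blockPart c k B - L * blockPart c k B * R)‖ := by
        rw [Finset.sum_sub_distrib, ← Finset.sum_mul, ← Finset.mul_sum, sum_blockPart]
    _ ≤ ∑ k : ZMod 3, 10 * t * ‖B‖ :=
        (norm_sum_le _ _).trans (Finset.sum_le_sum fun k _ => hblock k)
    _ = 30 * t * ‖B‖ := by simp; ring

end Band

section Unitary

variable {ι : Type*} [Fintype ι]

lemma star_transpose_of_mul_mul_apply (ψ : ι → ι → ℂ) (A : Matrix ι ι ℂ) (i j : ι) :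
    (star (of ψ)ᵀ * A * (of ψ)ᵀ) i j = star (ψ i) ⬝ᵥ (A *ᵥ ψ j) := by
  simp only [mul_apply, star_apply, transpose_apply, of_apply, dotProduct, mulVec, Pi.star_apply,
    Finset.mul_sum, Finset.sum_mul, mul_assoc]
  exact Finset.sum_comm

variable [DecidableEq ι]

lemma transpose_of_mem_unitary {ψ : ι → ι → ℂ}
    (h : ∀ i j, star (ψ i) ⬝ᵥ ψ j = if i = j then 1 else 0) :
    (of ψ)ᵀ ∈ unitary (Matrix ι ι ℂ) := by
  refine mem_unitaryGroup_iff'.2 (ext fun i j => ?_)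
  simpa [mul_apply, one_apply, dotProduct] using h i j

lemma eq_conj_diagonal_of_mulVec_eq {H : Matrix ι ι ℂ} {ψ : ι → ι → ℂ} {E : ι → ℂ}
    (hU : (of ψ)ᵀ ∈ unitary (Matrix ι ι ℂ)) (h : ∀ j, H *ᵥ ψ j = E j • ψ j) :
    H = (of ψ)ᵀ * diagonal E * star (of ψ)ᵀ := by
  have hHU : H * (of ψ)ᵀ = (of ψ)ᵀ * diagonal E := ext fun i j => by
    rw [mul_diagonal]
    simpa [mul_apply, mulVec, dotProduct, mul_comm] using congrFun (h j) i
  rw [← hHU, mul_assoc, Unitary.mul_star_self_of_mem hU, mul_one]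

lemma norm_sub_conj_mul_conj_eq {U : Matrix ι ι ℂ} (hU : U ∈ unitary (Matrix ι ι ℂ))
    (A D D' : Matrix ι ι ℂ) :
    ‖A - U * D * star U * A * (U * D' * star U)‖
      = ‖star U * A * U - D * (star U * A * U) * D'‖ := by
  have hconj : U * (star U * A * U - D * (star U * A * U) * D') * star U
      = A - U * D * star U * A * (U * D' * star U) := by
    calc _ = U * star U * A * (U * star U) - U * D * star U * A * (U * D' * star U) := by
          noncomm_ring
      _ = _ := by rw [Unitary.mul_star_self_of_mem hU, one_mul, mul_one]
  rw [← hconj, CStarRing.norm_mul_mem_unitary _ (Unitary.star_mem hU),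
    CStarRing.norm_mem_unitary_mul _ hU]

lemma conj_mul_conj {U : Matrix ι ι ℂ} (hU : U ∈ unitary (Matrix ι ι ℂ)) (D D' : Matrix ι ι ℂ) :
    U * D * star U * (U * D' * star U) = U * (D * D') * star U := by
  rw [show U * D * star U * (U * D' * star U) = U * (D * (star U * U) * D') * star U by
    noncomm_ring, Unitary.star_mul_self_of_mem hU, mul_one]

open scoped MatrixOrder in
lemma eq_conj_diagonal_of_sq_eq {U ρ : Matrix ι ι ℂ} (hU : U ∈ unitary (Matrix ι ι ℂ))
    (hρ : ρ.PosSemidef) {s : ι → ℝ} (hs : ∀ i, 0 ≤ s i)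
    (h : ρ ^ 2 = U * diagonal (fun i => ((s i ^ 2 : ℝ) : ℂ)) * star U) :
    ρ = U * diagonal (fun i => (s i : ℂ)) * star U := by
  have hS : (U * diagonal (fun i => (s i : ℂ)) * star U).PosSemidef :=
    (posSemidef_diagonal_iff.2 fun i => Complex.zero_le_real.2 (hs i)).mul_mul_conjTranspose_same U
  refine (CFC.sq_eq_sq_iff _ _ hρ.nonneg hS.nonneg).1 ?_
  rw [h, sq, conj_mul_conj hU, diagonal_mul_diagonal]
  simp [sq]

lemma inv_conj_diagonal {U : Matrix ι ι ℂ} (hU : U ∈ unitary (Matrix ι ι ℂ)) {s : ι → ℂ}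
    (hs : ∀ i, s i ≠ 0) : (U * diagonal s * star U)⁻¹ = U * diagonal s⁻¹ * star U := by
  refine inv_eq_right_inv ?_
  rw [conj_mul_conj hU, diagonal_mul_diagonal]
  simp [hs, Unitary.mul_star_self_of_mem hU]

end Unitary

lemma gibbs_eq_conj_diagonal {d : ℕ} {H U : Mat d} (hU : U ∈ unitary (Mat d)) {E : Fin d → ℝ}
    (hH : H = U * diagonal (fun i => (E i : ℂ)) * star U) (β : ℝ) :
    gibbs H β = U * diagonal (fun i =>
      ((Real.exp (-(β * E i)) / ∑ j, Real.exp (-(β * E j)) : ℝ) : ℂ)) * star U := by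
  have hexp : NormedSpace.exp ((-(β : ℂ)) • H)
      = U * diagonal (fun i => (Real.exp (-(β * E i)) : ℂ)) * star U := by
    have hinv : U⁻¹ = star U := inv_eq_left_inv (Unitary.star_mul_self_of_mem hU)
    rw [hH, ← smul_mul_assoc, ← mul_smul_comm, ← hinv,
      Matrix.exp_conj U _ (Unitary.isUnit_coe (U := ⟨U, hU⟩)), hinv, ← diagonal_smul, exp_diagonal]
    refine congrArg (fun v => U * diagonal v * star U) (funext fun i => ?_)
    simp [← Complex.exp_eq_exp_ℂ]
  have htrace : (NormedSpace.exp ((-(β : ℂ)) • H)).trace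
      = ((∑ j, Real.exp (-(β * E j)) : ℝ) : ℂ) := by
    rw [hexp, trace_mul_cycle, Unitary.star_mul_self_of_mem hU, one_mul, trace_diagonal]
    push_cast
    rfl
  rw [gibbs, htrace, hexp, ← smul_mul_assoc, ← mul_smul_comm, ← diagonal_smul]
  refine congrArg (fun v => U * diagonal v * star U) (funext fun i => ?_)
  simp [div_eq_inv_mul]

lemma eq_conj_diagonal_of_sq_eq_gibbs {d : ℕ} {H U ρ : Mat d} (hU : U ∈ unitary (Mat d))
    {E : Fin d → ℝ} (hH : H = U * diagonal (fun i => (E i : ℂ)) * star U) {β : ℝ}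
    (hρ : ρ.PosSemidef) (hρ2 : ρ ^ 2 = gibbs H β) :
    ρ = U * diagonal (fun i =>
      ((Real.exp (-(β * E i / 2)) / √(∑ j, Real.exp (-(β * E j))) : ℝ) : ℂ)) * star U := by
  refine eq_conj_diagonal_of_sq_eq hU hρ (fun i => by positivity) ?_
  rw [hρ2, gibbs_eq_conj_diagonal hU hH]
  refine congrArg (fun v => U * diagonal v * star U) (funext fun i => ?_)
  rw [div_pow, Real.sq_sqrt (by positivity), sq, ← Real.exp_add]
  ring_nf

lemma norm_sub_conj_eq_of_sq_eq_gibbs {d : ℕ} (hd : 1 ≤ d) {H U ρ : Mat d}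
    (hU : U ∈ unitary (Mat d)) {E : Fin d → ℝ}
    (hH : H = U * diagonal (fun i => (E i : ℂ)) * star U) {β : ℝ} (hρ : ρ.PosSemidef)
    (hρ2 : ρ ^ 2 = gibbs H β) (A : Mat d) :
    ‖A - ρ * A * ρ⁻¹‖ = ‖star U * A * U - diagonal (fun i => (Real.exp (-(β * E i / 2)) : ℂ)) *
      (star U * A * U) * diagonal (fun i => (Real.exp (β * E i / 2) : ℂ))‖ := by
  set Z := ∑ j, Real.exp (-(β * E j))
  have hZ : 0 < √Z :=
    Real.sqrt_pos.2 (Finset.sum_pos (fun _ _ => Real.exp_pos _) ⟨⟨0, hd⟩, Finset.mem_univ _⟩)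
  set s : Fin d → ℝ := fun i => Real.exp (-(β * E i / 2)) / √Z
  have hρs : ρ = U * diagonal (fun i => (s i : ℂ)) * star U :=
    eq_conj_diagonal_of_sq_eq_gibbs hU hH hρ hρ2
  have hρinv : ρ⁻¹ = U * diagonal (fun i => (s i : ℂ))⁻¹ * star U :=
    hρs ▸ inv_conj_diagonal hU fun i => Complex.ofReal_ne_zero.2 (by positivity)
  have hs : ∀ i j, s i * (s j)⁻¹ = Real.exp (-(β * E i / 2)) * Real.exp (β * E j / 2) :=
    fun i j => by rw [inv_div, div_mul_div_cancel₀ hZ.ne', div_eq_mul_inv, ← Real.exp_neg, neg_neg]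
  rw [hρinv, hρs, norm_sub_conj_mul_conj_eq hU,
    diagonal_mul_mul_diagonal_congr (l := fun i => (Real.exp (-(β * E i / 2)) : ℂ))
      (r := fun i => (Real.exp (β * E i / 2) : ℂ)) fun i j _ => by
        simp only [Pi.inv_apply]; exact_mod_cast hs i j]

lemma opNorm_eq_norm {m n : Type*} [Fintype m] [Fintype n] [DecidableEq n] (A : Matrix m n ℂ) :
    opNorm A = ‖A‖ := rfl

/-- Operators whose matrix elements vanish between eigenstates whose energies
differ by more than `μ` approximately commute with powers of the Gibbs state:
`‖A - ρ^{1/2} A ρ^{-1/2}‖ ≤ C·βμ·‖A‖`. -/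
theorem stmt18 :
    ∃ C : ℝ, 0 < C ∧
      ∀ (d : ℕ), 1 ≤ d →
      ∀ (H : Mat d) (E : Fin d → ℝ) (ψ : Fin d → Fin d → ℂ),
        H.IsHermitian →
        (∀ i j, dotProduct (star (ψ i)) (ψ j) = if i = j then 1 else 0) →
        (∀ j, H.mulVec (ψ j) = ((E j : ℝ) : ℂ) • ψ j) →
      ∀ β μ : ℝ, 0 < β → 0 < μ → β * μ ≤ 1 →
      ∀ A : Mat d,
        (∀ i j, μ < |E i - E j| → dotProduct (star (ψ i)) (A.mulVec (ψ j)) = 0) →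
      ∀ ρh : Mat d, ρh.PosDef → ρh ^ 2 = gibbs H β →
        opNorm (A - ρh * A * ρh⁻¹) ≤ C * (β * μ) * opNorm A := by
  refine ⟨15, by norm_num, fun d hd H E ψ _ horth heig β μ hβ hμ hβμ A hA ρh hρ hρ2 => ?_⟩
  set U : Mat d := (of ψ)ᵀ
  have hU : U ∈ unitary (Mat d) := transpose_of_mem_unitary horth
  have hband : ∀ i j, β * μ / 2 < |β * E i / 2 - β * E j / 2| → (star U * A * U) i j = 0 := by
    intro i j hij
    rw [show β * E i / 2 - β * E j / 2 = β / 2 * (E i - E j) by ring, abs_mul,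
      abs_of_pos (by positivity), mul_div_right_comm] at hij
    rw [star_transpose_of_mul_mul_apply]
    exact hA i j (lt_of_mul_lt_mul_left hij (by positivity))
  have hAn : ‖A‖ = ‖star U * A * U‖ := by
    rw [CStarRing.norm_mul_mem_unitary _ hU, CStarRing.norm_mem_unitary_mul _ (Unitary.star_mem hU)]
  rw [opNorm_eq_norm, opNorm_eq_norm, hAn, norm_sub_conj_eq_of_sq_eq_gibbs hd hU
    (eq_conj_diagonal_of_mulVec_eq hU heig) hρ.posSemidef hρ2]
  calc _ ≤ 30 * (β * μ / 2) * ‖star U * A * U‖ :=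
        norm_sub_diagonal_exp_conj_le (by positivity) (by linarith) hband
    _ = 15 * (β * μ) * ‖star U * A * U‖ := by ring

end Stmt18
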